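/- arXiv:2306.12730 — 2 statements merged into one kernel-verified Lean document; each statement's English description precedes it below -/
import Mathlib

section
/- The derivative of the matrix exponential is Lipschitz on skew-symmetric matrices with constant 1: for skew-symmetric E, E′ and any H with ‖H‖_F = 1, ‖∫₀¹ (exp(sE′) H exp((1−s)E′) − exp(sE) H exp((1−s)E)) ds‖_F ≤ ‖E′ − E‖_F. -/
open Matrix

/-- The Frobenius norm of a real matrix. -/
noncomputable def frobNorm {m n : Type*} [Fintype m] [Fintype n]
    (A : Matrix m n ℝ) : ℝ :=
  Real.sqrt (∑ i, ∑ j, (A i j) ^ 2)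


/-- The derivative of the matrix exponential at `E` in direction `H`,
`Dexp E H = ∫₀¹ exp(sE) · H · exp((1-s)E) ds` (defined entrywise). -/
noncomputable def Dexp {d : ℕ} (E H : Matrix (Fin d) (Fin d) ℝ) :
    Matrix (Fin d) (Fin d) ℝ :=
  Matrix.of fun i j =>
    ∫ s in (0:ℝ)..1,
      (NormedSpace.exp (s • E) * H * NormedSpace.exp ((1 - s) • E)) i j

/-!
Both `Dexp E' H` and `Dexp E H` are averages over `s ∈ [0, 1]` of `exp (sE) H exp ((1-s)E)`.
By Duhamel's formula `exp (tE') - exp (tE) = ∫₀ᵗ exp (rE') (E' - E) exp ((t-r)E) dr`, and since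
exponentials of skew-symmetric matrices are orthogonal and the Frobenius norm is invariant under
orthogonal factors, `‖exp (tE') - exp (tE)‖ ≤ t ‖E' - E‖`. Splitting the difference of integrands as
`(exp (sE') - exp (sE)) H exp ((1-s)E') + exp (sE) H (exp ((1-s)E') - exp ((1-s)E))` bounds it
pointwise by `(s + (1 - s)) ‖H‖ ‖E' - E‖`.
-/

open NormedSpace intervalIntegral

section Duhamel

variable {𝔸 : Type*} [NormedRing 𝔸] [NormedAlgebra ℝ 𝔸] [CompleteSpace 𝔸]

theorem hasDerivAt_exp_smul_mul_exp_smul (A B : 𝔸) (t r : ℝ) :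
    HasDerivAt (fun u : ℝ => exp (u • A) * exp ((t - u) • B))
      (exp (r • A) * (A - B) * exp ((t - r) • B)) r := by
  have hB : HasDerivAt (fun u : ℝ => exp ((t - u) • B)) (-(exp ((t - r) • B) * B)) r := by
    simpa [Function.comp_def] using
      (hasDerivAt_exp_smul_const B (t - r)).scomp r ((hasDerivAt_id r).const_sub t)
  refine ((hasDerivAt_exp_smul_const' A r).mul hB).congr_deriv ?_
  rw [((Commute.refl A).smul_right r).exp_right.eq,
    ← ((Commute.refl B).smul_right (t - r)).exp_right.eq]
  noncomm_ring

theorem continuous_exp_smul (A : 𝔸) : Continuous fun u : ℝ => exp (u • A) :=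
  continuous_iff_continuousAt.2 fun u => (hasDerivAt_exp_smul_const A u).continuousAt

theorem continuous_exp_smul_mul_mul_exp_smul (A B C : 𝔸) (t : ℝ) :
    Continuous fun r : ℝ => exp (r • A) * C * exp ((t - r) • B) :=
  ((continuous_exp_smul A).mul continuous_const).mul
    ((continuous_exp_smul B).comp (continuous_const.sub continuous_id))

theorem exp_smul_sub_exp_smul_eq_intervalIntegral (A B : 𝔸) (t : ℝ) :
    exp (t • A) - exp (t • B) = ∫ r in (0 : ℝ)..t, exp (r • A) * (A - B) * exp ((t - r) • B) := by
  rw [integral_eq_sub_of_hasDerivAt (fun r _ => hasDerivAt_exp_smul_mul_exp_smul A B t r)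
    ((continuous_exp_smul_mul_mul_exp_smul A B (A - B) t).intervalIntegrable _ _)]
  simp

end Duhamel

attribute [local instance] Matrix.frobeniusNormedAddCommGroup Matrix.frobeniusNormedSpace
  Matrix.frobeniusNormedRing Matrix.frobeniusNormedAlgebra

namespace Matrix

variable {m n : Type*} [Fintype m] [Fintype n]

theorem frobNorm_eq_norm (A : Matrix m n ℝ) : frobNorm A = ‖A‖ := by
  rw [frobNorm, frobenius_norm_def, ← Real.sqrt_eq_rpow]
  simp [Real.norm_eq_abs, sq_abs]

theorem frobenius_norm_sq_eq_trace (A : Matrix m n ℝ) : ‖A‖ ^ 2 = trace (Aᵀ * A) := by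
  rw [← frobNorm_eq_norm, frobNorm, Real.sq_sqrt (by positivity)]
  simp only [trace, diag, mul_apply, transpose_apply, sq]
  exact Finset.sum_comm

theorem intervalIntegral_apply {f : ℝ → Matrix m n ℝ} (hf : Continuous f) (a b : ℝ) (i : m)
    (j : n) : (∫ s in a..b, f s) i j = ∫ s in a..b, f s i j :=
  ((entryLinearMap ℝ ℝ i j).toContinuousLinearMap.intervalIntegral_comp_comm
    (hf.intervalIntegrable a b)).symm

variable [DecidableEq n]

theorem frobenius_norm_unitary_mul {U : Matrix n n ℝ} (hU : U ∈ unitary (Matrix n n ℝ))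
    (A : Matrix n m ℝ) : ‖U * A‖ = ‖A‖ := by
  have hUU : Uᵀ * U = 1 := by simpa [star_eq_conjTranspose] using Unitary.star_mul_self_of_mem hU
  rw [← sq_eq_sq₀ (norm_nonneg _) (norm_nonneg _), frobenius_norm_sq_eq_trace,
    frobenius_norm_sq_eq_trace, transpose_mul, Matrix.mul_assoc, ← Matrix.mul_assoc Uᵀ, hUU,
    Matrix.one_mul]

theorem frobenius_norm_mul_unitary {U : Matrix n n ℝ} (hU : U ∈ unitary (Matrix n n ℝ))
    (A : Matrix m n ℝ) : ‖A * U‖ = ‖A‖ := by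
  have hUt : Uᵀ ∈ unitary (Matrix n n ℝ) := by
    simpa [star_eq_conjTranspose] using Unitary.star_mem hU
  rw [← frobenius_norm_transpose, transpose_mul, frobenius_norm_unitary_mul hUt,
    frobenius_norm_transpose]

theorem exp_smul_mem_unitary {E : Matrix n n ℝ} (hE : Eᵀ = -E) (t : ℝ) :
    exp (t • E) ∈ unitary (Matrix n n ℝ) :=
  exp_mem_unitary_of_mem_skewAdjoint <| skewAdjoint.smul_mem t <| by
    simpa [skewAdjoint.mem_iff, star_eq_conjTranspose] using hE

theorem norm_exp_smul_sub_exp_smul_le {E E' : Matrix n n ℝ} (hE : Eᵀ = -E) (hE' : E'ᵀ = -E')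
    {t : ℝ} (ht : 0 ≤ t) : ‖exp (t • E') - exp (t • E)‖ ≤ t * ‖E' - E‖ := by
  rw [show exp (t • E') - exp (t • E) = _ from exp_smul_sub_exp_smul_eq_intervalIntegral E' E t]
  have hbound : ∀ r ∈ Set.uIoc 0 t, ‖exp (r • E') * (E' - E) * exp ((t - r) • E)‖ ≤ ‖E' - E‖ :=
    fun r _ => by
      rw [frobenius_norm_mul_unitary (exp_smul_mem_unitary hE _),
        frobenius_norm_unitary_mul (exp_smul_mem_unitary hE' _)]
  refine (norm_integral_le_of_norm_le_const hbound).trans_eq ?_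
  rw [sub_zero, abs_of_nonneg ht, mul_comm]

theorem norm_exp_smul_mul_mul_exp_smul_sub_le {E E' : Matrix n n ℝ} (hE : Eᵀ = -E)
    (hE' : E'ᵀ = -E') (H : Matrix n n ℝ) {s : ℝ} (hs₀ : 0 ≤ s) (hs₁ : s ≤ 1) :
    ‖exp (s • E') * H * exp ((1 - s) • E') - exp (s • E) * H * exp ((1 - s) • E)‖ ≤
      ‖H‖ * ‖E' - E‖ := by
  have hsplit : exp (s • E') * H * exp ((1 - s) • E') - exp (s • E) * H * exp ((1 - s) • E) =
      (exp (s • E') - exp (s • E)) * H * exp ((1 - s) • E') +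
        exp (s • E) * (H * (exp ((1 - s) • E') - exp ((1 - s) • E))) := by
    noncomm_ring
  rw [hsplit]
  calc _ ≤ ‖(exp (s • E') - exp (s • E)) * H * exp ((1 - s) • E')‖ +
          ‖exp (s • E) * (H * (exp ((1 - s) • E') - exp ((1 - s) • E)))‖ := norm_add_le _ _
    _ = ‖(exp (s • E') - exp (s • E)) * H‖ + ‖H * (exp ((1 - s) • E') - exp ((1 - s) • E))‖ := by
        rw [frobenius_norm_mul_unitary (exp_smul_mem_unitary hE' _),
          frobenius_norm_unitary_mul (exp_smul_mem_unitary hE _)]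
    _ ≤ ‖exp (s • E') - exp (s • E)‖ * ‖H‖ +
          ‖H‖ * ‖exp ((1 - s) • E') - exp ((1 - s) • E)‖ :=
        add_le_add (norm_mul_le _ _) (norm_mul_le _ _)
    _ ≤ s * ‖E' - E‖ * ‖H‖ + ‖H‖ * ((1 - s) * ‖E' - E‖) := by
        gcongr
        · exact norm_exp_smul_sub_exp_smul_le hE hE' hs₀
        · exact norm_exp_smul_sub_exp_smul_le hE hE' (by linarith)
    _ = ‖H‖ * ‖E' - E‖ := by ring

end Matrix

theorem Dexp_eq_intervalIntegral {d : ℕ} (E H : Matrix (Fin d) (Fin d) ℝ) :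
    Dexp E H = ∫ s in (0 : ℝ)..1, exp (s • E) * H * exp ((1 - s) • E) := by
  ext i j
  exact (intervalIntegral_apply (continuous_exp_smul_mul_mul_exp_smul E E H 1) 0 1 i j).symm

theorem norm_Dexp_sub_Dexp_le {d : ℕ} {E E' : Matrix (Fin d) (Fin d) ℝ} (hE : Eᵀ = -E)
    (hE' : E'ᵀ = -E') (H : Matrix (Fin d) (Fin d) ℝ) :
    ‖Dexp E' H - Dexp E H‖ ≤ ‖H‖ * ‖E' - E‖ := by
  rw [Dexp_eq_intervalIntegral, Dexp_eq_intervalIntegral,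
    ← integral_sub (f := fun s => exp (s • E') * H * exp ((1 - s) • E'))
    (g := fun s => exp (s • E) * H * exp ((1 - s) • E))
    ((continuous_exp_smul_mul_mul_exp_smul E' E' H 1).intervalIntegrable _ _)
    ((continuous_exp_smul_mul_mul_exp_smul E E H 1).intervalIntegrable _ _)]
  have hbound : ∀ s ∈ Set.uIoc (0 : ℝ) 1,
      ‖exp (s • E') * H * exp ((1 - s) • E') - exp (s • E) * H * exp ((1 - s) • E)‖ ≤
        ‖H‖ * ‖E' - E‖ := fun s hs => by
    rw [Set.uIoc_of_le zero_le_one] at hs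
    exact norm_exp_smul_mul_mul_exp_smul_sub_le hE hE' H hs.1.le hs.2
  simpa using norm_integral_le_of_norm_le_const hbound

/-- The derivative of the matrix exponential is `1`-Lipschitz on skew-symmetric
matrices. -/
theorem stmt_4 (d : ℕ) (E E' H : Matrix (Fin d) (Fin d) ℝ)
    (hE : Eᵀ = -E) (hE' : E'ᵀ = -E') (hH : frobNorm H = 1) :
    frobNorm (Dexp E' H - Dexp E H) ≤ frobNorm (E' - E) := by
  rw [frobNorm_eq_norm] at hH
  simpa [frobNorm_eq_norm, hH] using norm_Dexp_sub_Dexp_le hE hE' H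
end

section
/- For d = 3 and nonzero skew-symmetric E ∈ ℝ^{3×3}, the distance from exp(E) to the identity satisfies ‖exp(E) − I₃‖_F ≥ √2 sin((√2/2)‖E‖_F) whenever (√2/2)‖E‖_F ≤ π. -/
/-!
Since `E` is skew, `exp E` is orthogonal and `‖exp E - 1‖_F² = 6 - 2 tr (exp E)`. By
Cayley–Hamilton a skew `3 × 3` matrix satisfies `E³ = -θ² E` with `θ = ‖E‖_F / √2`, so the
exponential series collapses to `tr (exp E) = 1 + 2 cos θ`. Hence
`‖exp E - 1‖_F² = 4 - 4 cos θ = 2 sin² θ + 2 (1 - cos θ)² ≥ 2 sin² θ`.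
-/

open Matrix

open NormedSpace

section PowThree

variable {R A : Type*} [CommSemiring R] [Semiring A] [Algebra R A] {a : A} {c : R}

theorem pow_two_mul_add_one_of_pow_three (h : a ^ 3 = c • a) (k : ℕ) :
    a ^ (2 * k + 1) = c ^ k • a := by
  induction k with
  | zero => simp
  | succ k ih =>
    rw [show 2 * (k + 1) + 1 = 2 * k + 1 + 2 by ring, pow_add, ih, smul_mul_assoc, ← pow_succ',
      h, smul_smul, pow_succ]

theorem pow_two_mul_add_two_of_pow_three (h : a ^ 3 = c • a) (k : ℕ) :
    a ^ (2 * k + 2) = c ^ k • a ^ 2 := by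
  rw [pow_succ, pow_two_mul_add_one_of_pow_three h, smul_mul_assoc, sq]

end PowThree

section Matrix

variable {m n : Type*} [Fintype m] [Fintype n]

theorem frobNorm_nonneg (A : Matrix m n ℝ) : 0 ≤ frobNorm A := Real.sqrt_nonneg _

theorem frobNorm_sq (A : Matrix m n ℝ) : frobNorm A ^ 2 = trace (Aᵀ * A) := by
  rw [frobNorm, Real.sq_sqrt (by positivity), Finset.sum_comm]
  simp [trace, mul_apply, sq]

theorem trace_eq_zero_of_transpose_eq_neg {E : Matrix n n ℝ} (hE : Eᵀ = -E) : trace E = 0 := by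
  have h := congrArg trace hE
  rw [trace_transpose, trace_neg] at h
  linarith

variable [DecidableEq n]

theorem trace_sq_of_transpose_eq_neg {E : Matrix n n ℝ} (hE : Eᵀ = -E) :
    trace (E ^ 2) = -frobNorm E ^ 2 := by
  rw [frobNorm_sq, hE, neg_mul, trace_neg, neg_neg, sq]

theorem frobNorm_sub_one_sq_of_transpose_mul_self {Q : Matrix n n ℝ} (hQ : Qᵀ * Q = 1) :
    frobNorm (Q - 1) ^ 2 = 2 * Fintype.card n - 2 * trace Q := by
  have h : (Q - 1)ᵀ * (Q - 1) = 1 - Qᵀ - Q + 1 := by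
    rw [transpose_sub, transpose_one, sub_mul, mul_sub, mul_sub, hQ, mul_one, one_mul, one_mul]
    abel
  rw [frobNorm_sq, h, trace_add, trace_sub, trace_sub, trace_transpose, trace_one]
  ring

theorem transpose_exp_mul_exp_of_transpose_eq_neg {E : Matrix n n ℝ} (hE : Eᵀ = -E) :
    (exp E)ᵀ * exp E = 1 := by
  rw [← exp_transpose, hE, ← exp_add_of_commute _ _ (Commute.refl E).neg_left, neg_add_cancel,
    exp_zero]

theorem hasSum_trace_exp (E : Matrix n n ℝ) :
    HasSum (fun k ↦ (k.factorial : ℝ)⁻¹ * trace (E ^ k)) (trace (exp E)) := by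
  -- any normed algebra structure will do: its topology is the product topology
  have h : HasSum (fun k ↦ (k.factorial : ℝ)⁻¹ • E ^ k) (exp E) :=
    open scoped Matrix.Norms.Operator in exp_series_hasSum_exp' E
  simpa [Function.comp_def, trace_smul] using
    h.map (traceAddMonoidHom n ℝ) continuous_id.matrix_trace

theorem trace_exp_eq_of_pow_three {E : Matrix n n ℝ} {θ : ℝ} (h3 : E ^ 3 = (-θ ^ 2) • E)
    (h1 : trace E = 0) (h2 : trace (E ^ 2) = -2 * θ ^ 2) :
    trace (exp E) = Fintype.card n - 2 + 2 * Real.cos θ := by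
  have hodd : HasSum (fun k ↦ ((2 * k + 1).factorial : ℝ)⁻¹ * trace (E ^ (2 * k + 1))) 0 := by
    simp [pow_two_mul_add_one_of_pow_three h3, trace_smul, h1]
  have hterm (k : ℕ) : ((2 * k).factorial : ℝ)⁻¹ * trace (E ^ (2 * k)) =
      2 * ((-1) ^ k * θ ^ (2 * k) / (2 * k).factorial) +
        if k = 0 then (Fintype.card n : ℝ) - 2 else 0 := by
    rcases k with _ | k
    · simp
    · rw [show 2 * (k + 1) = 2 * k + 2 by ring, pow_two_mul_add_two_of_pow_three h3, trace_smul,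
        h2, smul_eq_mul, if_neg k.succ_ne_zero]
      ring
  have heven : HasSum (fun k ↦ ((2 * k).factorial : ℝ)⁻¹ * trace (E ^ (2 * k)))
      (2 * Real.cos θ + (Fintype.card n - 2)) := by
    simpa only [hterm] using ((Real.hasSum_cos θ).mul_left 2).add (hasSum_ite_eq 0 _)
  rw [(hasSum_trace_exp E).unique
    (HasSum.even_add_odd (f := fun k ↦ (k.factorial : ℝ)⁻¹ * trace (E ^ k)) heven hodd)]
  ring

end Matrix

theorem pow_three_eq_neg_smul_of_transpose_eq_neg {E : Matrix (Fin 3) (Fin 3) ℝ} (hE : Eᵀ = -E) :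
    E ^ 3 = -(frobNorm E ^ 2 / 2) • E := by
  have hskew (i j : Fin 3) : E j i = -E i j := by simpa using congrFun₂ hE i j
  have h00 : E 0 0 = 0 := by linarith [hskew 0 0]
  have h11 : E 1 1 = 0 := by linarith [hskew 1 1]
  have h22 : E 2 2 = 0 := by linarith [hskew 2 2]
  rw [frobNorm, Real.sq_sqrt (by positivity)]
  ext i j
  fin_cases i <;> fin_cases j <;>
    simp [pow_succ, mul_apply, Fin.sum_univ_three, h00, h11, h22, hskew 0 1, hskew 0 2,
      hskew 1 2] <;> ring

theorem sqrt_two_mul_sin_le_sqrt_four_sub_four_mul_cos (x : ℝ) :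
    √2 * Real.sin x ≤ √(4 - 4 * Real.cos x) := by
  rcases le_or_gt (Real.sin x) 0 with hsin | hsin
  · exact (mul_nonpos_of_nonneg_of_nonpos (Real.sqrt_nonneg 2) hsin).trans (Real.sqrt_nonneg _)
  · rw [← Real.sqrt_sq hsin.le, ← Real.sqrt_mul zero_le_two]
    apply Real.sqrt_le_sqrt
    nlinarith [Real.sin_sq_add_cos_sq x, Real.cos_le_one x, Real.neg_one_le_cos x]

theorem stmt_16_general (E : Matrix (Fin 3) (Fin 3) ℝ) (hE : Eᵀ = -E) :
    Real.sqrt 2 * Real.sin (Real.sqrt 2 / 2 * frobNorm E) ≤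
      frobNorm (NormedSpace.exp E - 1) := by
  set θ := Real.sqrt 2 / 2 * frobNorm E
  have hθ : θ ^ 2 = frobNorm E ^ 2 / 2 := by
    rw [mul_pow, div_pow, Real.sq_sqrt zero_le_two]
    ring
  have htrace : trace (exp E) = 1 + 2 * Real.cos θ := by
    rw [trace_exp_eq_of_pow_three (θ := θ)
      (by rw [hθ, pow_three_eq_neg_smul_of_transpose_eq_neg hE])
      (trace_eq_zero_of_transpose_eq_neg hE)
      (by rw [trace_sq_of_transpose_eq_neg hE, hθ]; ring)]
    norm_num
  have hnorm : frobNorm (exp E - 1) = √(4 - 4 * Real.cos θ) := by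
    rw [← Real.sqrt_sq (frobNorm_nonneg _),
      frobNorm_sub_one_sq_of_transpose_mul_self (transpose_exp_mul_exp_of_transpose_eq_neg hE),
      htrace]
    congr 1
    norm_num
    ring
  rw [hnorm]
  exact sqrt_two_mul_sin_le_sqrt_four_sub_four_mul_cos θ

/-- For a nonzero skew-symmetric `3 × 3` matrix `E` with `(√2/2)‖E‖_F ≤ π`,
`‖exp(E) − I‖_F ≥ √2 · sin((√2/2)‖E‖_F)`. -/
theorem stmt_16 (E : Matrix (Fin 3) (Fin 3) ℝ) (hE : Eᵀ = -E) (hne : E ≠ 0)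
    (hbound : Real.sqrt 2 / 2 * frobNorm E ≤ Real.pi) :
    Real.sqrt 2 * Real.sin (Real.sqrt 2 / 2 * frobNorm E) ≤
      frobNorm (NormedSpace.exp E - 1) :=
  stmt_16_general E hE
end
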